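/- arXiv:2006.05566 — 2 statements merged into one kernel-verified Lean document; each statement's English description precedes it below -/
import Mathlib

section
/- For every real x, e^{x²} · ∫_x^∞ e^{-t²} dt > 1/(x + √(x²+2)). -/
open Real MeasureTheory Set Filter Topology

/-!
With `s = √(t² + 2)`, the minorant `G t = e^{-t²} / (t + s)` (`tailMinorant`) tends to `0`
at `+∞` and satisfies `-G' t = e^{-t²} (2 t s + 1) / (s (t + s)) < e^{-t²}`, because `s (t + s) - (2 t s + 1) = t² + 1 - t s`
is positive by AM-GM (`|t| < s`). Integrating `e^{-t²} + G'` over `(x, ∞)` gives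
`G x < ∫_x^∞ e^{-t²}`, which is the claim after multiplying by `e^{x²}`.
-/

lemma abs_lt_sqrt_sq_add_two (t : ℝ) : |t| < √(t ^ 2 + 2) :=
  lt_sqrt_of_sq_lt (by rw [sq_abs]; linarith)

lemma add_sqrt_sq_add_two_pos (t : ℝ) : 0 < t + √(t ^ 2 + 2) := by
  linarith [neg_abs_le t, abs_lt_sqrt_sq_add_two t]

lemma abs_mul_sqrt_sq_add_two_lt (t : ℝ) : |t * √(t ^ 2 + 2)| < t ^ 2 + 1 := by
  have hs : √(t ^ 2 + 2) ^ 2 = t ^ 2 + 2 := sq_sqrt (by positivity)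
  have hlt := abs_lt_sqrt_sq_add_two t
  rw [abs_mul, abs_of_pos ((abs_nonneg t).trans_lt hlt)]
  nlinarith [sq_abs t, mul_pos (sub_pos.2 hlt) (sub_pos.2 hlt)]

lemma one_lt_sqrt_sq_add_two_mul (t : ℝ) : 1 < √(t ^ 2 + 2) * (t + √(t ^ 2 + 2)) := by
  have hs : √(t ^ 2 + 2) ^ 2 = t ^ 2 + 2 := sq_sqrt (by positivity)
  nlinarith [neg_abs_le (t * √(t ^ 2 + 2)), abs_mul_sqrt_sq_add_two_lt t]

lemma two_mul_sqrt_sq_add_two_add_one_lt (t : ℝ) :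
    2 * t * √(t ^ 2 + 2) + 1 < √(t ^ 2 + 2) * (t + √(t ^ 2 + 2)) := by
  have hs : √(t ^ 2 + 2) ^ 2 = t ^ 2 + 2 := sq_sqrt (by positivity)
  nlinarith [le_abs_self (t * √(t ^ 2 + 2)), abs_mul_sqrt_sq_add_two_lt t]

lemma integrable_pow_mul_exp_neg_mul_sq {b : ℝ} (hb : 0 < b) (n : ℕ) :
    Integrable fun x : ℝ => x ^ n * exp (-b * x ^ 2) := by
  simpa only [rpow_natCast] using
    integrable_rpow_mul_exp_neg_mul_sq hb (s := n) (by linarith [n.cast_nonneg (α := ℝ)])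

lemma setIntegral_Ioi_pos {f : ℝ → ℝ} {a : ℝ} (hf : IntegrableOn f (Ioi a))
    (hpos : ∀ t ∈ Ioi a, 0 < f t) : 0 < ∫ t in Ioi a, f t := by
  rw [setIntegral_pos_iff_support_of_nonneg_ae
    ((ae_restrict_iff' measurableSet_Ioi).2 (ae_of_all _ fun t ht => (hpos t ht).le)) hf,
    inter_eq_right.2 fun t ht => Function.mem_support.2 (hpos t ht).ne', volume_Ioi]
  exact ENNReal.zero_lt_top

noncomputable def tailMinorant (t : ℝ) : ℝ := exp (-t ^ 2) / (t + √(t ^ 2 + 2))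

noncomputable def tailMinorantDeriv (t : ℝ) : ℝ :=
  -exp (-t ^ 2) * (2 * t * √(t ^ 2 + 2) + 1) / (√(t ^ 2 + 2) * (t + √(t ^ 2 + 2)))

lemma hasDerivAt_tailMinorant (t : ℝ) : HasDerivAt tailMinorant (tailMinorantDeriv t) t := by
  have hs : 0 < √(t ^ 2 + 2) := sqrt_pos.2 (by positivity)
  have hsqrt : HasDerivAt (fun u => √(u ^ 2 + 2)) (2 * t / (2 * √(t ^ 2 + 2))) t := by
    simpa using ((hasDerivAt_pow 2 t).add_const 2).sqrt (by positivity)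
  have hexp : HasDerivAt (fun u => exp (-u ^ 2)) (exp (-t ^ 2) * -(2 * t)) t := by
    simpa using ((hasDerivAt_pow 2 t).neg).exp
  have hpos := add_sqrt_sq_add_two_pos t
  refine (hexp.fun_div ((hasDerivAt_id' t).fun_add hsqrt) hpos.ne').congr_deriv ?_
  rw [tailMinorantDeriv]
  field_simp
  ring

lemma tendsto_tailMinorant_atTop : Tendsto tailMinorant atTop (𝓝 0) := by
  have hexp : Tendsto (fun t : ℝ => exp (-t ^ 2)) atTop (𝓝 0) :=
    tendsto_exp_atBot.comp (tendsto_neg_atTop_atBot.comp (tendsto_pow_atTop two_ne_zero))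
  refine squeeze_zero' (Eventually.of_forall fun t =>
    div_nonneg (exp_pos _).le (add_sqrt_sq_add_two_pos t).le) ?_ hexp
  filter_upwards [eventually_ge_atTop 0] with t ht
  refine div_le_self (exp_pos _).le ?_
  linarith [one_le_sqrt.2 (by nlinarith [sq_nonneg t] : (1 : ℝ) ≤ t ^ 2 + 2)]

lemma abs_tailMinorantDeriv_le (t : ℝ) :
    |tailMinorantDeriv t| ≤ (2 * t ^ 2 + 3) * exp (-t ^ 2) := by
  have hnum : |2 * t * √(t ^ 2 + 2) + 1| ≤ 2 * t ^ 2 + 3 := by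
    have := abs_le.1 (abs_mul_sqrt_sq_add_two_lt t).le
    rw [abs_le]; constructor <;> linarith
  have hden := one_lt_sqrt_sq_add_two_mul t
  rw [tailMinorantDeriv, abs_div, abs_mul, abs_neg, abs_of_pos (exp_pos _),
    abs_of_pos (zero_lt_one.trans hden), div_le_iff₀ (zero_lt_one.trans hden)]
  calc exp (-t ^ 2) * |2 * t * √(t ^ 2 + 2) + 1|
      ≤ (2 * t ^ 2 + 3) * exp (-t ^ 2) * 1 := by rw [mul_one, mul_comm]; gcongr
    _ ≤ _ := by gcongr

lemma integrable_tailMinorantDeriv : Integrable tailMinorantDeriv := by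
  have hdom : Integrable fun t : ℝ => (2 * t ^ 2 + 3) * exp (-t ^ 2) := by
    refine (((integrable_pow_mul_exp_neg_mul_sq one_pos 2).const_mul 2).add
      ((integrable_exp_neg_mul_sq one_pos).const_mul 3)).congr (ae_of_all _ fun t => ?_)
    simp only [Pi.add_apply, neg_one_mul]
    ring
  refine hdom.mono' ?_ (ae_of_all _ abs_tailMinorantDeriv_le)
  refine (Continuous.div (by fun_prop) (by fun_prop) fun t => ?_).aestronglyMeasurable
  exact (zero_lt_one.trans (one_lt_sqrt_sq_add_two_mul t)).ne'

lemma integral_Ioi_tailMinorantDeriv (x : ℝ) :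
    ∫ t in Ioi x, tailMinorantDeriv t = -tailMinorant x := by
  rw [integral_Ioi_of_hasDerivAt_of_tendsto' (fun t _ => hasDerivAt_tailMinorant t)
    integrable_tailMinorantDeriv.integrableOn tendsto_tailMinorant_atTop, zero_sub]

lemma exp_neg_sq_add_tailMinorantDeriv_pos (t : ℝ) : 0 < exp (-t ^ 2) + tailMinorantDeriv t := by
  have hden := zero_lt_one.trans (one_lt_sqrt_sq_add_two_mul t)
  have hq : (2 * t * √(t ^ 2 + 2) + 1) / (√(t ^ 2 + 2) * (t + √(t ^ 2 + 2))) < 1 :=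
    (div_lt_one hden).2 (two_mul_sqrt_sq_add_two_add_one_lt t)
  rw [tailMinorantDeriv, neg_mul, neg_div, mul_div_assoc, ← sub_eq_add_neg, sub_pos]
  exact mul_lt_of_lt_one_right (exp_pos _) hq

lemma tailMinorant_lt_integral_Ioi (x : ℝ) : tailMinorant x < ∫ t in Ioi x, exp (-t ^ 2) := by
  have hexp : IntegrableOn (fun t : ℝ => exp (-t ^ 2)) (Ioi x) := by
    simpa using (integrable_exp_neg_mul_sq one_pos).integrableOn
  have h : 0 < ∫ t in Ioi x, (exp (-t ^ 2) + tailMinorantDeriv t) :=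
    setIntegral_Ioi_pos (hexp.add integrable_tailMinorantDeriv.integrableOn)
      fun t _ => exp_neg_sq_add_tailMinorantDeriv_pos t
  rw [integral_add hexp integrable_tailMinorantDeriv.integrableOn,
    integral_Ioi_tailMinorantDeriv] at h
  linarith

theorem stmt2 (x : ℝ) :
    Real.exp (x ^ 2) * ∫ t in Set.Ioi x, Real.exp (-t ^ 2) >
      1 / (x + Real.sqrt (x ^ 2 + 2)) :=
  calc 1 / (x + √(x ^ 2 + 2)) = exp (x ^ 2) * tailMinorant x := by
        rw [tailMinorant, mul_div_assoc', ← exp_add, add_neg_cancel, exp_zero]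
    _ < exp (x ^ 2) * ∫ t in Ioi x, exp (-t ^ 2) :=
        mul_lt_mul_of_pos_left (tailMinorant_lt_integral_Ioi x) (exp_pos _)
end

section
/- Gaussian centroid shift theorem: Let f(x) = (1/√(2πσ²))·exp(−(x−μ)²/(2σ²)) with μ ∈ ℝ, σ > 0, let g(x) = f(x−h) with h > 0, and let S = ℝ \ (ℓ, u) with ℓ < u. Define the centroid ⟨φ⟩_S = (∫_S x φ(x) dx)/(∫_S φ(x) dx). Then ⟨g⟩_S > ⟨f⟩_S. -/
/-!
The shifted density is an exponential tilt of the original one: `g x = f x * exp (k x + c)` with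
`k = h / σ² > 0`. Normalising the masses `A = ∫_S f` and `B = ∫_S g`, the difference `A g - B f`
therefore changes sign exactly once, from negative to positive, at the point `x₀` where
`A exp (k x₀ + c) = B`. Since `∫_S (A g - B f) = 0`, the quantity `A ∫_S x g - B ∫_S x f` equals
`∫_S (x - x₀) (A g - B f)`, whose integrand is positive off `x₀`.
-/

open Real MeasureTheory Set ProbabilityTheory
open scoped NNReal

noncomputable def centroid (ν : Measure ℝ) (φ : ℝ → ℝ) : ℝ :=
  (∫ x, x * φ x ∂ν) / ∫ x, φ x ∂ν

theorem StrictMono.sub_mul_sub_pos {α : Type*} [Ring α] [LinearOrder α] [IsStrictOrderedRing α]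
    {φ : α → α} (hφ : StrictMono φ) {x y : α} (hxy : x ≠ y) : 0 < (x - y) * (φ x - φ y) := by
  rcases hxy.lt_or_gt with h | h
  · exact mul_pos_of_neg_of_neg (sub_neg.2 h) (sub_neg.2 (hφ h))
  · exact mul_pos (sub_pos.2 h) (sub_pos.2 (hφ h))

theorem integral_pos_of_forall_pos {α : Type*} [MeasurableSpace α] {ν : Measure α} (hν : ν ≠ 0)
    {f : α → ℝ} (hf : Integrable f ν) (hpos : ∀ x, 0 < f x) : 0 < ∫ x, f x ∂ν := by
  rw [integral_pos_iff_support_of_nonneg (fun x ↦ (hpos x).le) hf,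
    Function.support_eq_univ fun x ↦ (hpos x).ne']
  exact Measure.measure_univ_pos.2 hν

section Centroid

variable {ν : Measure ℝ} [NullSingletonClass ν] {f g : ℝ → ℝ}

theorem centroid_lt_centroid_of_sign_change (hν : ν ≠ 0) (hf : Integrable f ν)
    (hg : Integrable g ν) (hxf : Integrable (fun x ↦ x * f x) ν)
    (hxg : Integrable (fun x ↦ x * g x) ν) (hA : 0 < ∫ x, f x ∂ν) (hB : 0 < ∫ x, g x ∂ν)
    {x₀ : ℝ} (hsign : ∀ x ≠ x₀, 0 < (x - x₀) * ((∫ x, f x ∂ν) * g x - (∫ x, g x ∂ν) * f x)) :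
    centroid ν f < centroid ν g := by
  set A := ∫ x, f x ∂ν
  set B := ∫ x, g x ∂ν
  set D := fun x ↦ (x - x₀) * (A * g x - B * f x)
  have hD_eq : ∫ x, D x ∂ν = A * ∫ x, x * g x ∂ν - B * ∫ x, x * f x ∂ν := by
    calc ∫ x, D x ∂ν
        = ∫ x, (A * (x * g x) - B * (x * f x)) - (x₀ * A * g x - x₀ * B * f x) ∂ν := by
          congr 1; ext x; simp only [D]; ring
      _ = (A * ∫ x, x * g x ∂ν - B * ∫ x, x * f x ∂ν) - (x₀ * A * B - x₀ * B * A) := by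
          rw [integral_sub (by fun_prop) (by fun_prop), integral_sub (by fun_prop) (by fun_prop),
            integral_sub (by fun_prop) (by fun_prop)]
          simp only [integral_const_mul, A, B]
      _ = _ := by ring
  have hD : Integrable D ν := by
    refine (((hxg.const_mul A).sub (hxf.const_mul B)).sub
      ((hg.const_mul (x₀ * A)).sub (hf.const_mul (x₀ * B)))).congr (ae_of_all _ fun x ↦ ?_)
    simp only [D, Pi.sub_apply]; ring
  have hD_pos : 0 < ∫ x, D x ∂ν := by
    rw [integral_pos_iff_support_of_nonneg (fun x ↦ ?_) hD]
    · calc 0 < ν {x₀}ᶜ := by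
            rw [← Measure.restrict_apply_univ, restrict_compl_singleton]
            exact Measure.measure_univ_pos.2 hν
        _ ≤ ν (Function.support D) := measure_mono fun x hx ↦ (hsign x hx).ne'
    · rcases eq_or_ne x x₀ with rfl | hx
      · simp [D]
      · exact (hsign x hx).le
  rw [centroid, centroid, div_lt_div_iff₀ hA hB]
  linarith [mul_comm A (∫ x, x * g x ∂ν)]

theorem exists_sign_change_of_eq_mul_exp {k c A B : ℝ} (hk : 0 < k) (hf : ∀ x, 0 < f x)
    (hg : ∀ x, g x = f x * exp (k * x + c)) (hA : 0 < A) (hB : 0 < B) :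
    ∃ x₀, ∀ x ≠ x₀, 0 < (x - x₀) * (A * g x - B * f x) := by
  set x₀ := (log (B / A) - c) / k
  refine ⟨x₀, fun x hx ↦ ?_⟩
  have hB_eq : B = A * exp (k * x₀ + c) := by
    rw [show k * x₀ + c = log (B / A) by simp only [x₀]; field_simp; ring, exp_log (div_pos hB hA)]
    field_simp
  have hmono : StrictMono fun x ↦ exp (k * x + c) :=
    exp_strictMono.comp fun a b hab ↦ by
      show k * a + c < k * b + c; nlinarith
  calc 0 < A * f x * ((x - x₀) * (exp (k * x + c) - exp (k * x₀ + c))) :=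
        mul_pos (mul_pos hA (hf x)) (hmono.sub_mul_sub_pos hx)
    _ = (x - x₀) * (A * g x - B * f x) := by rw [hg, hB_eq]; ring

theorem centroid_lt_centroid_of_eq_mul_exp (hν : ν ≠ 0) {k c : ℝ} (hk : 0 < k)
    (hfpos : ∀ x, 0 < f x) (hfg : ∀ x, g x = f x * exp (k * x + c)) (hf : Integrable f ν)
    (hg : Integrable g ν) (hxf : Integrable (fun x ↦ x * f x) ν)
    (hxg : Integrable (fun x ↦ x * g x) ν) :
    centroid ν f < centroid ν g := by
  have hgpos x : 0 < g x := by rw [hfg]; exact mul_pos (hfpos x) (exp_pos _)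
  have hA := integral_pos_of_forall_pos hν hf hfpos
  have hB := integral_pos_of_forall_pos hν hg hgpos
  obtain ⟨x₀, hsign⟩ := exists_sign_change_of_eq_mul_exp hk hfpos hfg hA hB
  exact centroid_lt_centroid_of_sign_change hν hf hg hxf hxg hA hB hsign

end Centroid

theorem integrable_mul_gaussianPDFReal (m : ℝ) (v : ℝ≥0) :
    Integrable fun x ↦ x * gaussianPDFReal m v x := by
  rcases eq_or_ne v 0 with rfl | hv
  · simp [gaussianPDFReal_zero_var]
  have := (memLp_id_gaussianReal (μ := m) (v := v) 1).integrable le_rfl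
  rw [gaussianReal_of_var_ne_zero m hv, integrable_withDensity_iff_integrable_smul'
    (measurable_gaussianPDF m v) (ae_of_all _ fun _ ↦ gaussianPDF_lt_top)] at this
  simpa [toReal_gaussianPDF, mul_comm] using this

theorem gaussianPDFReal_add_mean (m h : ℝ) (v : ℝ≥0) (x : ℝ) :
    gaussianPDFReal (m + h) v x =
      gaussianPDFReal m v x * exp (h / v * x - (2 * m + h) * h / (2 * v)) := by
  rcases eq_or_ne v 0 with rfl | hv
  · simp [gaussianPDFReal_zero_var]
  simp only [gaussianPDFReal]
  rw [mul_assoc _ (rexp _), ← exp_add]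
  congr 2
  field_simp
  ring

theorem stmt16_general (μ σ h ℓ u : ℝ) (hσ : 0 < σ) (hh : 0 < h)
    (f g : ℝ → ℝ)
    (hf : ∀ x, f x = (Real.sqrt (2 * Real.pi * σ ^ 2))⁻¹ *
      Real.exp (-(x - μ) ^ 2 / (2 * σ ^ 2)))
    (hg : ∀ x, g x = f (x - h)) :
    (∫ x in Set.univ \ Set.Ioo ℓ u, x * g x) / (∫ x in Set.univ \ Set.Ioo ℓ u, g x) >
      (∫ x in Set.univ \ Set.Ioo ℓ u, x * f x) / (∫ x in Set.univ \ Set.Ioo ℓ u, f x) := by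
  set v : ℝ≥0 := ⟨σ ^ 2, sq_nonneg σ⟩
  have hv : v ≠ 0 := ne_of_gt (show (0 : ℝ) < σ ^ 2 by positivity)
  obtain rfl : f = gaussianPDFReal μ v := funext hf
  obtain rfl : g = gaussianPDFReal (μ + h) v := funext fun x ↦ by rw [hg, gaussianPDFReal_sub]
  have hS : volume (univ \ Ioo ℓ u) ≠ 0 := by
    have hsub : Ici u ⊆ univ \ Ioo ℓ u := fun x hx ↦ ⟨trivial, fun hx' ↦ hx'.2.not_ge hx⟩
    exact fun h0 ↦ by simpa using measure_mono_null hsub h0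
  exact centroid_lt_centroid_of_eq_mul_exp (mt Measure.restrict_eq_zero.1 hS)
    (div_pos hh (show (0 : ℝ) < σ ^ 2 by positivity)) (gaussianPDFReal_pos μ v · hv)
    (gaussianPDFReal_add_mean μ h v) (integrable_gaussianPDFReal μ v).integrableOn
    (integrable_gaussianPDFReal _ v).integrableOn (integrable_mul_gaussianPDFReal μ v).integrableOn
    (integrable_mul_gaussianPDFReal _ v).integrableOn

theorem stmt16 (μ σ h ℓ u : ℝ) (hσ : 0 < σ) (hh : 0 < h) (hlu : ℓ < u)
    (f g : ℝ → ℝ)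
    (hf : ∀ x, f x = (Real.sqrt (2 * Real.pi * σ ^ 2))⁻¹ *
      Real.exp (-(x - μ) ^ 2 / (2 * σ ^ 2)))
    (hg : ∀ x, g x = f (x - h)) :
    (∫ x in Set.univ \ Set.Ioo ℓ u, x * g x) / (∫ x in Set.univ \ Set.Ioo ℓ u, g x) >
      (∫ x in Set.univ \ Set.Ioo ℓ u, x * f x) / (∫ x in Set.univ \ Set.Ioo ℓ u, f x) :=
  stmt16_general μ σ h ℓ u hσ hh f g hf hg
end
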